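/- For every integer m ≥ 3, the Sperner systems ℳ^m_1 and ℳ^m_2 over E_m are strongly hypomorphic: for every two-element subset I of E_m, the Sperner systems (ℳ^m_1)*_I and (ℳ^m_2)*_I are isomorphic. -/
import Mathlib


section SetSystems

variable {α β : Type*}

/-- A family of finite sets is a Sperner system (an antichain under inclusion). -/
def IsSperner [DecidableEq α] (F : Finset (Finset α)) : Prop :=
  ∀ S ∈ F, ∀ T ∈ F, S ⊆ T → S = T

/-- Isomorphism of set systems with the given ground sets: a bijection `σ` of the
ground set `A` onto the ground set `B` mapping the family `F` onto the family `G`. -/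
def SystemIso [DecidableEq α] [DecidableEq β] (A : Finset α) (F : Finset (Finset α))
    (B : Finset β) (G : Finset (Finset β)) : Prop :=
  ∃ σ : α → β, Set.BijOn σ ↑A ↑B ∧ F.image (fun S => S.image σ) = G

/-- Identification of `v` with `u` inside a block: `S_I = (S ∖ {v}) ∪ {u}` if `v ∈ S`,
and `S_I = S` otherwise. -/
def identifyBlock [DecidableEq α] (u v : α) (S : Finset α) : Finset α :=
  if v ∈ S then insert u (S.erase v) else S

/-- The identified system `𝒜_I` for `I = {u, v}` (with `u` the kept representative). -/
def identifySystem [DecidableEq α] (u v : α) (F : Finset (Finset α)) : Finset (Finset α) :=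
  F.image (identifyBlock u v)

/-- The minimal members of a family with respect to inclusion. -/
def minimals [DecidableEq α] (F : Finset (Finset α)) : Finset (Finset α) :=
  F.filter (fun S => ∀ T ∈ F, T ⊆ S → T = S)

/-- `𝒜*_I`: the Sperner system of minimal members of the identified system. -/
def starMinor [DecidableEq α] (u v : α) (F : Finset (Finset α)) : Finset (Finset α) :=
  minimals (identifySystem u v F)

/-- Strong hypomorphism: for every two-element subset `I = {u, v}` of the ground set `A`,
the systems `F*_I` and `G*_I` (both over `A ∖ {v}`) are isomorphic. -/
def StronglyHypomorphic [DecidableEq α] (A : Finset α) (F G : Finset (Finset α)) : Prop :=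
  ∀ u ∈ A, ∀ v ∈ A, u ≠ v →
    SystemIso (A.erase v) (starMinor u v F) (A.erase v) (starMinor u v G)

/-- Hypomorphism: a bijection `φ` of the two-element subsets of the ground set `A`
such that `F*_I` is isomorphic to `G*_{φ I}` for every two-element subset `I`. -/
def Hypomorphic [DecidableEq α] (A : Finset α) (F G : Finset (Finset α)) : Prop :=
  ∃ φ : {P : Finset α // P ∈ A.powersetCard 2} ≃ {P : Finset α // P ∈ A.powersetCard 2},
    ∀ (P : {P : Finset α // P ∈ A.powersetCard 2}) (u v u' v' : α),
      u ≠ v → (P : Finset α) = {u, v} → u' ≠ v' → ((φ P : Finset α)) = {u', v'} →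
      SystemIso (A.erase v) (starMinor u v F) (A.erase v') (starMinor u' v' G)

-- my lemmas
variable [DecidableEq α]

lemma mem_minimals_iff {F : Finset (Finset α)} {S : Finset α} :
    S ∈ minimals F ↔ S ∈ F ∧ ∀ T ∈ F, T ⊆ S → T = S := by
  simp [minimals]

lemma minimals_insert_of_exists {C : Finset (Finset α)} {Y Z : Finset α}
    (hZ : Z ∈ C) (hZY : Z ⊆ Y) : minimals (insert Y C) = minimals C := by
  by_cases hYC : Y ∈ C
  · rw [Finset.insert_eq_self.2 hYC]
  · ext S
    simp only [mem_minimals_iff, Finset.mem_insert]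
    constructor
    · rintro ⟨hS | hS, hmin⟩
      · exfalso
        subst hS
        have hZS := hmin Z (Or.inr hZ) hZY
        exact hYC (hZS ▸ hZ)
      · exact ⟨hS, fun T hT hTS => hmin T (Or.inr hT) hTS⟩
    · rintro ⟨hS, hmin⟩
      refine ⟨Or.inr hS, ?_⟩
      rintro T (rfl | hT) hTS
      · have hZS := hmin Z hZ (hZY.trans hTS)
        exact subset_antisymm hTS (hZS ▸ hZY)
      · exact hmin T hT hTS

lemma minimals_image {σ : α → β} [DecidableEq β] (hσ : Function.Injective σ)
    (F : Finset (Finset α)) :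
    minimals (F.image (fun S => S.image σ)) = (minimals F).image (fun S => S.image σ) := by
  have himg : Function.Injective (fun S : Finset α => S.image σ) :=
    Finset.image_injective hσ
  ext T
  simp only [mem_minimals_iff, Finset.mem_image]
  constructor
  · rintro ⟨⟨S, hS, rfl⟩, hmin⟩
    refine ⟨S, ⟨hS, ?_⟩, rfl⟩
    intro T' hT' hT'S
    have := hmin (T'.image σ) ⟨T', hT', rfl⟩ (Finset.image_subset_image hT'S)
    exact himg this
  · rintro ⟨S, ⟨hS, hmin⟩, rfl⟩
    refine ⟨⟨S, hS, rfl⟩, ?_⟩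
    rintro T' ⟨T'', hT'', rfl⟩ hsub
    rw [Finset.image_subset_image_iff hσ] at hsub
    rw [hmin T'' hT'' hsub]

lemma identifyBlock_image_comm {σ : α → α} (hσ : Function.Injective σ) {u v : α}
    (hu : σ u = u) (hv : σ v = v) (S : Finset α) :
    (identifyBlock u v S).image σ = identifyBlock u v (S.image σ) := by
  have hvmem : v ∈ S.image σ ↔ v ∈ S := by
    constructor
    · rintro h
      obtain ⟨x, hx, hxv⟩ := Finset.mem_image.1 h
      have : x = v := hσ (by rw [hxv, hv])
      exact this ▸ hx
    · intro h; exact Finset.mem_image.2 ⟨v, h, hv⟩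
  unfold identifyBlock
  by_cases h : v ∈ S
  · rw [if_pos h, if_pos (hvmem.2 h), Finset.image_insert, hu,
      Finset.image_erase hσ, hv]
  · rw [if_neg h, if_neg (fun hh => h (hvmem.1 hh))]

lemma identifySystem_image_comm {σ : α → α} (hσ : Function.Injective σ) {u v : α}
    (hu : σ u = u) (hv : σ v = v) (F : Finset (Finset α)) :
    identifySystem u v (F.image (fun S => S.image σ))
      = (identifySystem u v F).image (fun S => S.image σ) := by
  unfold identifySystem
  rw [Finset.image_image, Finset.image_image]
  exact Finset.image_congr (fun S _ => (identifyBlock_image_comm hσ hu hv S).symm)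

lemma identifyBlock_subset_identifyBlock {u v : α} {S T : Finset α}
    (h1 : ∀ x ∈ S, x ≠ v → x = u ∨ x ∈ T)
    (h2 : u ∈ S ∨ v ∈ S → u ∈ T ∨ v ∈ T) :
    identifyBlock u v S ⊆ identifyBlock u v T := by
  unfold identifyBlock
  by_cases hvS : v ∈ S <;> by_cases hvT : v ∈ T <;>
    simp only [if_pos, if_neg, hvS, hvT, if_true, if_false]
  · intro x hx
    rcases Finset.mem_insert.1 hx with rfl | hx
    · exact Finset.mem_insert_self _ _
    · obtain ⟨hxv, hxS⟩ := Finset.mem_erase.1 hx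
      rcases h1 x hxS hxv with rfl | hxT
      · exact Finset.mem_insert_self _ _
      · exact Finset.mem_insert_of_mem (Finset.mem_erase.2 ⟨hxv, hxT⟩)
  · intro x hx
    rcases Finset.mem_insert.1 hx with rfl | hx
    · rcases h2 (Or.inr hvS) with h | h
      · exact h
      · exact absurd h hvT
    · obtain ⟨hxv, hxS⟩ := Finset.mem_erase.1 hx
      rcases h1 x hxS hxv with rfl | hxT
      · rcases h2 (Or.inr hvS) with h | h
        · exact h
        · exact absurd h hvT
      · exact hxT
  · intro x hx
    have hxv : x ≠ v := fun h => hvS (h ▸ hx)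
    rcases h1 x hx hxv with rfl | hxT
    · exact Finset.mem_insert_self _ _
    · exact Finset.mem_insert_of_mem (Finset.mem_erase.2 ⟨hxv, hxT⟩)
  · intro x hx
    have hxv : x ≠ v := fun h => hvS (h ▸ hx)
    rcases h1 x hx hxv with rfl | hxT
    · rcases h2 (Or.inl hx) with h | h
      · exact h
      · exact absurd h hvT
    · exact hxT

end SetSystems

/-- The ground set `E_m`: two disjoint copies of `{1, …, m}` (modelled as `ZMod m`);
`Sum.inl i` is the unprimed element `i` and `Sum.inr i` is the primed element `i'`. -/
abbrev Em (m : ℕ) := ZMod m ⊕ ZMod m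

/-- `A^m_J = J ∪ ({1,…,m} ∖ J)'`. -/
def AJ (m : ℕ) [NeZero m] (J : Finset (ZMod m)) : Finset (Em m) :=
  J.image Sum.inl ∪ Jᶜ.image Sum.inr

/-- `G^m_1 = {A^m_J : J ⊆ {1,…,m}, |J| odd}`. -/
def G1 (m : ℕ) [NeZero m] : Finset (Finset (Em m)) :=
  ((Finset.univ : Finset (ZMod m)).powerset.filter fun J => Odd J.card).image (AJ m)

/-- `G^m_2 = {A^m_J : J ⊆ {1,…,m}, |J| even}`. -/
def G2 (m : ℕ) [NeZero m] : Finset (Finset (Em m)) :=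
  ((Finset.univ : Finset (ZMod m)).powerset.filter fun J => Even J.card).image (AJ m)

/-- `F^m_p = E_m ∖ {p, p', (p+1)'}`. -/
def Fblock (m : ℕ) [NeZero m] (p : ZMod m) : Finset (Em m) :=
  Finset.univ \ {Sum.inl p, Sum.inr p, Sum.inr (p + 1)}

/-- `F^m = {F^m_p : p ∈ {1,…,m}}`. -/
def Fsys (m : ℕ) [NeZero m] : Finset (Finset (Em m)) :=
  Finset.univ.image (Fblock m)

/-- `ℳ^m_1 = G^m_1 ∪ F^m`. -/
def M1 (m : ℕ) [NeZero m] : Finset (Finset (Em m)) := G1 m ∪ Fsys m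

/-- `ℳ^m_2 = G^m_2 ∪ F^m`. -/
def M2 (m : ℕ) [NeZero m] : Finset (Finset (Em m)) := G2 m ∪ Fsys m

namespace HypoProof

open Finset

set_option linter.unusedSectionVars false

variable {m : ℕ} [NeZero m]

/-- swap of the pair `k`. -/
def tau (k : ZMod m) : Em m → Em m :=
  Sum.elim (fun i => if i = k then Sum.inr k else Sum.inl i)
    (fun i => if i = k then Sum.inl k else Sum.inr i)

lemma tau_invol (k : ZMod m) (x : Em m) : tau k (tau k x) = x := by
  rcases x with i | i <;> by_cases h : i = k <;> simp [tau, h]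

lemma tau_inj (k : ZMod m) : Function.Injective (tau (m := m) k) :=
  Function.LeftInverse.injective (tau_invol k)

lemma tau_inl (k a : ZMod m) (h : a ≠ k) : tau k (Sum.inl a) = Sum.inl a := by
  simp [tau, h]

lemma tau_inr (k a : ZMod m) (h : a ≠ k) : tau k (Sum.inr a) = Sum.inr a := by
  simp [tau, h]

lemma mem_AJ_inl {J : Finset (ZMod m)} {j : ZMod m} : Sum.inl j ∈ AJ m J ↔ j ∈ J := by
  simp [AJ]

lemma mem_AJ_inr {J : Finset (ZMod m)} {j : ZMod m} : Sum.inr j ∈ AJ m J ↔ j ∉ J := by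
  simp [AJ]

lemma image_tau_AJ (k : ZMod m) (J : Finset (ZMod m)) :
    (AJ m J).image (tau k) = AJ m (symmDiff J {k}) := by
  ext x
  have : x ∈ (AJ m J).image (tau k) ↔ tau k x ∈ AJ m J := by
    constructor
    · rintro h
      obtain ⟨y, hy, rfl⟩ := Finset.mem_image.1 h
      rwa [tau_invol]
    · intro h
      exact Finset.mem_image.2 ⟨tau k x, h, tau_invol k x⟩
  rw [this]
  rcases x with i | i <;> by_cases h : i = k <;>
    simp [tau, h, mem_AJ_inl, mem_AJ_inr, Finset.mem_symmDiff] <;> tauto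

lemma card_symmDiff_parity (k : ZMod m) (J : Finset (ZMod m)) :
    Even (symmDiff J {k}).card ↔ Odd J.card := by
  by_cases h : k ∈ J
  · have hs : symmDiff J {k} = J.erase k := by
      ext j
      simp only [Finset.mem_symmDiff, Finset.mem_singleton, Finset.mem_erase]
      constructor
      · rintro (⟨hj, hk⟩ | ⟨rfl, hk⟩)
        · exact ⟨hk, hj⟩
        · exact absurd h hk
      · rintro ⟨hk, hj⟩; exact Or.inl ⟨hj, hk⟩
    have hpos : 0 < J.card := Finset.card_pos.2 ⟨k, h⟩
    rw [hs, Finset.card_erase_of_mem h, Nat.even_iff, Nat.odd_iff]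
    omega
  · have hs : symmDiff J {k} = insert k J := by
      ext j
      simp only [Finset.mem_symmDiff, Finset.mem_singleton, Finset.mem_insert]
      constructor
      · rintro (⟨hj, hk⟩ | ⟨rfl, hk⟩) <;> tauto
      · rintro (rfl | h1)
        · exact Or.inr ⟨rfl, h⟩
        · exact Or.inl ⟨h1, fun he => h (he ▸ h1)⟩
    rw [hs, Finset.card_insert_of_notMem h, Nat.even_add_one, Nat.not_even_iff_odd]

lemma card_symmDiff_parity' (k : ZMod m) (J : Finset (ZMod m)) :
    Odd (symmDiff J {k}).card ↔ Even J.card := by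
  rw [← Nat.not_even_iff_odd, card_symmDiff_parity, Nat.not_odd_iff_even]

lemma image_tau_G1 (k : ZMod m) :
    (G1 m).image (fun S => S.image (tau k)) = G2 m := by
  unfold G1 G2
  rw [Finset.image_image]
  ext S
  simp only [Finset.mem_image, Finset.mem_filter, Finset.mem_powerset, Function.comp]
  constructor
  · rintro ⟨J, ⟨-, hodd⟩, rfl⟩
    exact ⟨symmDiff J {k}, ⟨Finset.subset_univ _, (card_symmDiff_parity k J).2 hodd⟩,
      (image_tau_AJ k J).symm⟩
  · rintro ⟨K, ⟨-, heven⟩, rfl⟩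
    refine ⟨symmDiff K {k}, ⟨Finset.subset_univ _,
      (card_symmDiff_parity' k K).2 heven⟩, ?_⟩
    rw [image_tau_AJ, symmDiff_symmDiff_cancel_right]


/-- the deformed block `X_h = E ∖ {h, h', h+1}` (image of `F_h` under `tau (h+1)`). -/
def Xblock (m : ℕ) [NeZero m] (h : ZMod m) : Finset (Em m) :=
  Finset.univ \ {Sum.inl h, Sum.inr h, Sum.inl (h + 1)}

lemma mem_Fblock {p : ZMod m} {x : Em m} :
    x ∈ Fblock m p ↔ x ≠ Sum.inl p ∧ x ≠ Sum.inr p ∧ x ≠ Sum.inr (p + 1) := by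
  simp [Fblock]

lemma mem_Xblock {h : ZMod m} {x : Em m} :
    x ∈ Xblock m h ↔ x ≠ Sum.inl h ∧ x ≠ Sum.inr h ∧ x ≠ Sum.inl (h + 1) := by
  simp [Xblock]

lemma mem_image_tau {k : ZMod m} {S : Finset (Em m)} {x : Em m} :
    x ∈ S.image (tau k) ↔ tau k x ∈ S := by
  constructor
  · rintro h
    obtain ⟨y, hy, rfl⟩ := Finset.mem_image.1 h
    rwa [tau_invol]
  · intro h
    exact Finset.mem_image.2 ⟨tau k x, h, tau_invol k x⟩

lemma image_tau_Fblock_ne {k p : ZMod m} (h : k ≠ p + 1) :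
    (Fblock m p).image (tau k) = Fblock m p := by
  ext x
  rw [mem_image_tau, mem_Fblock, mem_Fblock]
  rcases x with i | i <;> by_cases hik : i = k
  · subst hik
    simp only [tau, Sum.elim_inl, if_pos rfl]
    simp [h]
  · simp [tau, hik]
  · subst hik
    simp only [tau, Sum.elim_inr, if_pos rfl]
    simp [h]
  · simp [tau, hik]

lemma image_tau_Fblock_eq (h : ZMod m) :
    (Fblock m h).image (tau (h + 1)) = Xblock m h := by
  ext x
  rw [mem_image_tau, mem_Fblock, mem_Xblock]
  rcases x with i | i <;> by_cases hik : i = h + 1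
  · subst hik
    simp only [tau, Sum.elim_inl, if_pos rfl]
    simp
  · simp [tau, hik]
  · subst hik
    simp only [tau, Sum.elim_inr, if_pos rfl]
    simp
  · simp [tau, hik]


lemma AJ_mem_G2 {K : Finset (ZMod m)} (h : Even K.card) : AJ m K ∈ G2 m :=
  Finset.mem_image_of_mem (AJ m)
    (Finset.mem_filter.2 ⟨Finset.mem_powerset.2 (Finset.subset_univ _), h⟩)

lemma skeleton (u v : Em m) (k : ZMod m)
    (hu : tau k u = u) (hv : tau k v = v)
    (K₁ K₂ : Finset (ZMod m)) (h₁ : Even K₁.card) (h₂ : Even K₂.card)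
    (hZ1 : identifyBlock u v (AJ m K₁) ⊆ identifyBlock u v (Fblock m (k - 1)))
    (hZ2 : identifyBlock u v (AJ m K₂) ⊆ identifyBlock u v (Xblock m (k - 1))) :
    SystemIso (Finset.univ.erase v) (starMinor u v (M1 m))
      (Finset.univ.erase v) (starMinor u v (M2 m)) := by
  set p := k - 1 with hp
  have hk1 : p + 1 = k := by rw [hp]; ring
  set C0 : Finset (Finset (Em m)) :=
    G2 m ∪ (Finset.univ.erase p).image (Fblock m) with hC0
  have hFsys : Fsys m = insert (Fblock m p) ((Finset.univ.erase p).image (Fblock m)) := by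
    unfold Fsys
    conv_lhs => rw [← Finset.insert_erase (Finset.mem_univ p)]
    rw [Finset.image_insert]
  have hM2 : M2 m = insert (Fblock m p) C0 := by
    rw [M2, hFsys, hC0, Finset.union_insert]
  have hFsysim : (Fsys m).image (fun S => S.image (tau k)) =
      insert (Xblock m p) ((Finset.univ.erase p).image (Fblock m)) := by
    rw [hFsys, Finset.image_insert]
    congr 1
    · rw [← hk1, image_tau_Fblock_eq]
    · rw [Finset.image_image]
      refine Finset.image_congr ?_
      intro q hq
      have hq' : q ≠ p := (Finset.mem_erase.1 hq).1
      have : k ≠ q + 1 := by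
        rw [← hk1]
        intro he
        exact hq' (add_right_cancel he).symm
      exact image_tau_Fblock_ne this
  have hM1im : (M1 m).image (fun S => S.image (tau k)) = insert (Xblock m p) C0 := by
    rw [M1, Finset.image_union, image_tau_G1, hFsysim, Finset.union_insert]
  have hZ1' : identifyBlock u v (AJ m K₁) ∈ identifySystem u v C0 :=
    Finset.mem_image_of_mem _ (Finset.mem_union_left _ (AJ_mem_G2 h₁))
  have hZ2' : identifyBlock u v (AJ m K₂) ∈ identifySystem u v C0 :=
    Finset.mem_image_of_mem _ (Finset.mem_union_left _ (AJ_mem_G2 h₂))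
  have hinj := tau_inj (m := m) k
  have hne : ∀ x : Em m, x ≠ v → tau k x ≠ v := by
    intro x hx he
    exact hx (by rw [← tau_invol k x, he, hv])
  refine ⟨tau k, ⟨?_, hinj.injOn, ?_⟩, ?_⟩
  · intro x hx
    simp only [Finset.coe_erase, Set.mem_diff, Set.mem_singleton_iff] at hx ⊢
    exact ⟨by simp, hne x hx.2⟩
  · intro y hy
    simp only [Finset.coe_erase, Set.mem_diff, Set.mem_singleton_iff] at hy
    refine ⟨tau k y, ?_, tau_invol k y⟩
    simp only [Finset.coe_erase, Set.mem_diff, Set.mem_singleton_iff]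
    exact ⟨by simp, hne y hy.2⟩
  · calc (starMinor u v (M1 m)).image (fun S => S.image (tau k))
        = minimals ((identifySystem u v (M1 m)).image (fun S => S.image (tau k))) :=
          (minimals_image hinj _).symm
      _ = minimals (identifySystem u v ((M1 m).image (fun S => S.image (tau k)))) := by
          rw [identifySystem_image_comm hinj hu hv]
      _ = minimals (insert (identifyBlock u v (Xblock m p)) (identifySystem u v C0)) := by
          rw [hM1im]; simp only [identifySystem, Finset.image_insert]
      _ = minimals (identifySystem u v C0) := minimals_insert_of_exists hZ2' hZ2
      _ = minimals (insert (identifyBlock u v (Fblock m p)) (identifySystem u v C0)) :=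
          (minimals_insert_of_exists hZ1' hZ1).symm
      _ = starMinor u v (M2 m) := by
          rw [starMinor, hM2]; simp only [identifySystem, Finset.image_insert]


lemma zmod_two_ne_zero (hm : 3 ≤ m) : (2 : ZMod m) ≠ 0 := by
  intro h
  have h2 : ((2 : ℕ) : ZMod m) = 0 := by exact_mod_cast h
  have := (ZMod.natCast_eq_zero_iff 2 m).1 h2
  have := Nat.le_of_dvd (by norm_num) this
  omega

lemma zmod_one_ne_zero (hm : 3 ≤ m) : (1 : ZMod m) ≠ 0 := by
  intro h
  have h1 : ((1 : ℕ) : ZMod m) = 0 := by exact_mod_cast h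
  have := (ZMod.natCast_eq_zero_iff 1 m).1 h1
  have := Nat.le_of_dvd (by norm_num) this
  omega

lemma zmod_add_one_ne (hm : 3 ≤ m) (x : ZMod m) : x + 1 ≠ x := by
  intro h
  have h' : x + 1 = x + 0 := by rw [add_zero]; exact h
  exact zmod_one_ne_zero hm (add_left_cancel h')

lemma zmod_add_two_ne (hm : 3 ≤ m) (x : ZMod m) : x + 2 ≠ x := by
  intro h
  have h' : x + 2 = x + 0 := by rw [add_zero]; exact h
  exact zmod_two_ne_zero hm (add_left_cancel h')

lemma insert_symmDiff (a : ZMod m) (J : Finset (ZMod m)) :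
    insert a (symmDiff J {a}) = insert a J := by
  ext j
  simp only [Finset.mem_insert, Finset.mem_symmDiff, Finset.mem_singleton]
  tauto

lemma erase_symmDiff (a : ZMod m) (J : Finset (ZMod m)) :
    (symmDiff J {a}).erase a = J.erase a := by
  ext j
  simp only [Finset.mem_erase, Finset.mem_symmDiff, Finset.mem_singleton]
  tauto

lemma idB_AJ_lr (a : ZMod m) (J : Finset (ZMod m)) :
    identifyBlock (Sum.inl a) (Sum.inr a) (AJ m J) = AJ m (insert a J) := by
  unfold identifyBlock
  by_cases h : a ∈ J
  · rw [if_neg (by simp [mem_AJ_inr, h]), Finset.insert_eq_self.2 h]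
  · rw [if_pos (mem_AJ_inr.2 h)]
    ext x
    rcases x with j | j
    · simp only [Finset.mem_insert, Finset.mem_erase, mem_AJ_inl]
      constructor
      · rintro (he | ⟨-, hj⟩)
        · exact Or.inl (Sum.inl.inj he)
        · exact Or.inr hj
      · rintro (rfl | hj)
        · exact Or.inl rfl
        · exact Or.inr ⟨by simp, hj⟩
    · simp only [Finset.mem_insert, Finset.mem_erase, mem_AJ_inr, not_or]
      constructor
      · rintro (he | ⟨hne, hj⟩)
        · exact absurd he (by simp)
        · exact ⟨fun hja => hne (by rw [hja]), hj⟩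
      · rintro ⟨hne, hj⟩
        exact Or.inr ⟨by simp [hne], hj⟩

lemma idB_AJ_rl (a : ZMod m) (J : Finset (ZMod m)) :
    identifyBlock (Sum.inr a) (Sum.inl a) (AJ m J) = AJ m (J.erase a) := by
  unfold identifyBlock
  by_cases h : a ∈ J
  · rw [if_pos (mem_AJ_inl.2 h)]
    ext x
    rcases x with j | j
    · simp only [Finset.mem_insert, Finset.mem_erase, mem_AJ_inl]
      constructor
      · rintro (he | ⟨hne, hj⟩)
        · exact absurd he (by simp)
        · exact ⟨fun hja => hne (by rw [hja]), hj⟩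
      · rintro ⟨hne, hj⟩
        exact Or.inr ⟨by simp [hne], hj⟩
    · simp only [Finset.mem_insert, Finset.mem_erase, mem_AJ_inr, Sum.inr.injEq]
      constructor
      · rintro (rfl | ⟨-, hj⟩)
        · exact fun h' => h'.1 rfl
        · exact fun h' => hj h'.2
      · intro hj
        by_cases hja : j = a
        · exact Or.inl hja
        · exact Or.inr ⟨by simp [hja], fun hjJ => hj ⟨hja, hjJ⟩⟩
  · rw [if_neg (by simp [mem_AJ_inl, h]), Finset.erase_eq_of_notMem h]


lemma idSys_G_lr (a : ZMod m) :
    identifySystem (Sum.inl a) (Sum.inr a) (G1 m)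
      = identifySystem (Sum.inl a) (Sum.inr a) (G2 m) := by
  unfold identifySystem G1 G2
  rw [Finset.image_image, Finset.image_image]
  ext S
  simp only [Finset.mem_image, Finset.mem_filter, Finset.mem_powerset, Function.comp_apply]
  constructor
  · rintro ⟨J, ⟨-, hpar⟩, rfl⟩
    refine ⟨symmDiff J {a}, ⟨Finset.subset_univ _, (card_symmDiff_parity a J).2 hpar⟩, ?_⟩
    rw [idB_AJ_lr, idB_AJ_lr, insert_symmDiff]
  · rintro ⟨J, ⟨-, hpar⟩, rfl⟩
    refine ⟨symmDiff J {a}, ⟨Finset.subset_univ _, (card_symmDiff_parity' a J).2 hpar⟩, ?_⟩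
    rw [idB_AJ_lr, idB_AJ_lr, insert_symmDiff]

lemma idSys_G_rl (a : ZMod m) :
    identifySystem (Sum.inr a) (Sum.inl a) (G1 m)
      = identifySystem (Sum.inr a) (Sum.inl a) (G2 m) := by
  unfold identifySystem G1 G2
  rw [Finset.image_image, Finset.image_image]
  ext S
  simp only [Finset.mem_image, Finset.mem_filter, Finset.mem_powerset, Function.comp_apply]
  constructor
  · rintro ⟨J, ⟨-, hpar⟩, rfl⟩
    refine ⟨symmDiff J {a}, ⟨Finset.subset_univ _, (card_symmDiff_parity a J).2 hpar⟩, ?_⟩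
    rw [idB_AJ_rl, idB_AJ_rl, erase_symmDiff]
  · rintro ⟨J, ⟨-, hpar⟩, rfl⟩
    refine ⟨symmDiff J {a}, ⟨Finset.subset_univ _, (card_symmDiff_parity' a J).2 hpar⟩, ?_⟩
    rw [idB_AJ_rl, idB_AJ_rl, erase_symmDiff]

lemma easy_iso (u v : Em m)
    (hsys : identifySystem u v (G1 m) = identifySystem u v (G2 m)) :
    SystemIso (Finset.univ.erase v) (starMinor u v (M1 m))
      (Finset.univ.erase v) (starMinor u v (M2 m)) := by
  have heq : starMinor u v (M1 m) = starMinor u v (M2 m) := by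
    unfold starMinor M1 M2
    unfold identifySystem at hsys ⊢
    rw [Finset.image_union, Finset.image_union, hsys]
  rw [heq]
  exact ⟨id, Set.bijOn_id _, by simp⟩

end HypoProof

open HypoProof

/-- For every integer `m ≥ 3`, the Sperner systems `ℳ^m_1` and `ℳ^m_2` over `E_m` are
strongly hypomorphic: for every two-element subset `I` of `E_m`, the Sperner systems
`(ℳ^m_1)*_I` and `(ℳ^m_2)*_I` are isomorphic. -/
theorem statement1 (m : ℕ) (hm : 3 ≤ m) :
    letI : NeZero m := ⟨by omega⟩
    StronglyHypomorphic (Finset.univ : Finset (Em m)) (M1 m) (M2 m) := by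
  letI : NeZero m := ⟨by omega⟩
  intro u _ v _ huv
  rcases u with a | a <;> rcases v with b | b
  · -- u = inl a, v = inl b
    have hab : a ≠ b := fun h => huv (by rw [h])
    by_cases hba : b = a + 1
    · -- k = b + 1
      have hab1 : a ≠ b + 1 := by
        intro h
        exact zmod_add_two_ne hm a
          (by rw [show (2:ZMod m) = 1 + 1 from by norm_num, ← add_assoc, ← hba, ← h])
      refine skeleton _ _ (b+1) (tau_inl _ _ hab1)
        (tau_inl _ _ (Ne.symm (zmod_add_one_ne hm b))) {b, b+1} {a, b} ?_ ?_ ?_ ?_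
      · rw [Finset.card_pair (Ne.symm (zmod_add_one_ne hm b))]; exact ⟨1, rfl⟩
      · rw [Finset.card_pair hab]; exact ⟨1, rfl⟩
      · rw [add_sub_cancel_right]
        refine identifyBlock_subset_identifyBlock ?_ ?_
        · intro x hx hxv
          rcases x with j | j
          · rw [mem_AJ_inl] at hx
            simp only [Finset.mem_insert, Finset.mem_singleton] at hx
            rcases hx with rfl | rfl
            · exact absurd rfl hxv
            · exact Or.inr (mem_Fblock.2 ⟨by simp [zmod_add_one_ne hm b], by simp, by simp⟩)
          · rw [mem_AJ_inr] at hx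
            simp only [Finset.mem_insert, Finset.mem_singleton, not_or] at hx
            exact Or.inr (mem_Fblock.2 ⟨by simp, by simp [hx.1], by simp [hx.2]⟩)
        · intro _
          exact Or.inl (mem_Fblock.2 ⟨by simp [hab], by simp, by simp⟩)
      · rw [add_sub_cancel_right]
        refine identifyBlock_subset_identifyBlock ?_ ?_
        · intro x hx hxv
          rcases x with j | j
          · rw [mem_AJ_inl] at hx
            simp only [Finset.mem_insert, Finset.mem_singleton] at hx
            rcases hx with rfl | rfl
            · exact Or.inl rfl
            · exact absurd rfl hxv
          · rw [mem_AJ_inr] at hx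
            simp only [Finset.mem_insert, Finset.mem_singleton, not_or] at hx
            exact Or.inr (mem_Xblock.2 ⟨by simp, by simp [hx.2], by simp⟩)
        · intro _
          exact Or.inl (mem_Xblock.2 ⟨by simp [hab], by simp, by simp [hab1]⟩)
    · -- k = a + 1
      refine skeleton _ _ (a+1) (tau_inl _ _ (Ne.symm (zmod_add_one_ne hm a)))
        (tau_inl _ _ hba) {a, a+1} {a, b} ?_ ?_ ?_ ?_
      · rw [Finset.card_pair (Ne.symm (zmod_add_one_ne hm a))]; exact ⟨1, rfl⟩
      · rw [Finset.card_pair hab]; exact ⟨1, rfl⟩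
      · rw [add_sub_cancel_right]
        refine identifyBlock_subset_identifyBlock ?_ ?_
        · intro x hx hxv
          rcases x with j | j
          · rw [mem_AJ_inl] at hx
            simp only [Finset.mem_insert, Finset.mem_singleton] at hx
            rcases hx with rfl | rfl
            · exact Or.inl rfl
            · exact Or.inr (mem_Fblock.2 ⟨by simp [zmod_add_one_ne hm a], by simp, by simp⟩)
          · rw [mem_AJ_inr] at hx
            simp only [Finset.mem_insert, Finset.mem_singleton, not_or] at hx
            exact Or.inr (mem_Fblock.2 ⟨by simp, by simp [hx.1], by simp [hx.2]⟩)
        · intro _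
          exact Or.inr (mem_Fblock.2 ⟨by simp [Ne.symm hab], by simp, by simp⟩)
      · rw [add_sub_cancel_right]
        refine identifyBlock_subset_identifyBlock ?_ ?_
        · intro x hx hxv
          rcases x with j | j
          · rw [mem_AJ_inl] at hx
            simp only [Finset.mem_insert, Finset.mem_singleton] at hx
            rcases hx with rfl | rfl
            · exact Or.inl rfl
            · exact absurd rfl hxv
          · rw [mem_AJ_inr] at hx
            simp only [Finset.mem_insert, Finset.mem_singleton, not_or] at hx
            exact Or.inr (mem_Xblock.2 ⟨by simp, by simp [hx.1], by simp⟩)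
        · intro _
          exact Or.inr (mem_Xblock.2 ⟨by simp [Ne.symm hab], by simp, by simp [hba]⟩)
  · -- u = inl a, v = inr b
    by_cases heq : a = b
    · subst heq
      exact easy_iso _ _ (idSys_G_lr a)
    · have hab : a ≠ b := heq
      by_cases hba : b = a + 1
      · -- k = b + 1
        have hab1 : a ≠ b + 1 := by
          intro h
          exact zmod_add_two_ne hm a
            (by rw [show (2:ZMod m) = 1 + 1 from by norm_num, ← add_assoc, ← hba, ← h])
        refine skeleton _ _ (b+1) (tau_inl _ _ hab1)
          (tau_inr _ _ (Ne.symm (zmod_add_one_ne hm b))) {a, b+1} (∅) ?_ ?_ ?_ ?_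
        · rw [Finset.card_pair hab1]; exact ⟨1, rfl⟩
        · simp
        · rw [add_sub_cancel_right]
          refine identifyBlock_subset_identifyBlock ?_ ?_
          · intro x hx hxv
            rcases x with j | j
            · rw [mem_AJ_inl] at hx
              simp only [Finset.mem_insert, Finset.mem_singleton] at hx
              rcases hx with rfl | rfl
              · exact Or.inl rfl
              · exact Or.inr (mem_Fblock.2 ⟨by simp [zmod_add_one_ne hm b], by simp, by simp⟩)
            · rw [mem_AJ_inr] at hx
              simp only [Finset.mem_insert, Finset.mem_singleton, not_or] at hx
              have hjb : j ≠ b := fun h => hxv (by rw [h])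
              exact Or.inr (mem_Fblock.2 ⟨by simp, by simp [hjb], by simp [hx.2]⟩)
          · intro _
            exact Or.inl (mem_Fblock.2 ⟨by simp [hab], by simp, by simp⟩)
        · rw [add_sub_cancel_right]
          refine identifyBlock_subset_identifyBlock ?_ ?_
          · intro x hx hxv
            rcases x with j | j
            · rw [mem_AJ_inl] at hx
              simp at hx
            · have hjb : j ≠ b := fun h => hxv (by rw [h])
              exact Or.inr (mem_Xblock.2 ⟨by simp, by simp [hjb], by simp⟩)
          · intro _
            exact Or.inl (mem_Xblock.2 ⟨by simp [hab], by simp, by simp [hab1]⟩)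
      · -- k = a + 1
        refine skeleton _ _ (a+1) (tau_inl _ _ (Ne.symm (zmod_add_one_ne hm a)))
          (tau_inr _ _ hba) {a, a+1} {a, b} ?_ ?_ ?_ ?_
        · rw [Finset.card_pair (Ne.symm (zmod_add_one_ne hm a))]; exact ⟨1, rfl⟩
        · rw [Finset.card_pair hab]; exact ⟨1, rfl⟩
        · rw [add_sub_cancel_right]
          refine identifyBlock_subset_identifyBlock ?_ ?_
          · intro x hx hxv
            rcases x with j | j
            · rw [mem_AJ_inl] at hx
              simp only [Finset.mem_insert, Finset.mem_singleton] at hx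
              rcases hx with rfl | rfl
              · exact Or.inl rfl
              · exact Or.inr (mem_Fblock.2 ⟨by simp [zmod_add_one_ne hm a], by simp, by simp⟩)
            · rw [mem_AJ_inr] at hx
              simp only [Finset.mem_insert, Finset.mem_singleton, not_or] at hx
              exact Or.inr (mem_Fblock.2 ⟨by simp, by simp [hx.1], by simp [hx.2]⟩)
          · intro _
            exact Or.inr (mem_Fblock.2 ⟨by simp, by simp [Ne.symm hab], by simp [hba]⟩)
        · rw [add_sub_cancel_right]
          refine identifyBlock_subset_identifyBlock ?_ ?_
          · intro x hx hxv
            rcases x with j | j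
            · rw [mem_AJ_inl] at hx
              simp only [Finset.mem_insert, Finset.mem_singleton] at hx
              rcases hx with rfl | rfl
              · exact Or.inl rfl
              · exact Or.inr (mem_Xblock.2 ⟨by simp [Ne.symm hab], by simp, by simp [hba]⟩)
            · rw [mem_AJ_inr] at hx
              simp only [Finset.mem_insert, Finset.mem_singleton, not_or] at hx
              exact Or.inr (mem_Xblock.2 ⟨by simp, by simp [hx.1], by simp⟩)
          · intro _
            exact Or.inr (mem_Xblock.2 ⟨by simp, by simp [Ne.symm hab], by simp⟩)
  · -- u = inr a, v = inl b
    by_cases heq : a = b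
    · subst heq
      exact easy_iso _ _ (idSys_G_rl a)
    · have hab : a ≠ b := heq
      by_cases hba : b = a + 1
      · -- k = b + 1
        have hab1 : a ≠ b + 1 := by
          intro h
          exact zmod_add_two_ne hm a
            (by rw [show (2:ZMod m) = 1 + 1 from by norm_num, ← add_assoc, ← hba, ← h])
        refine skeleton _ _ (b+1) (tau_inr _ _ hab1)
          (tau_inl _ _ (Ne.symm (zmod_add_one_ne hm b))) {b, b+1} {a, b} ?_ ?_ ?_ ?_
        · rw [Finset.card_pair (Ne.symm (zmod_add_one_ne hm b))]; exact ⟨1, rfl⟩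
        · rw [Finset.card_pair hab]; exact ⟨1, rfl⟩
        · rw [add_sub_cancel_right]
          refine identifyBlock_subset_identifyBlock ?_ ?_
          · intro x hx hxv
            rcases x with j | j
            · rw [mem_AJ_inl] at hx
              simp only [Finset.mem_insert, Finset.mem_singleton] at hx
              rcases hx with rfl | rfl
              · exact absurd rfl hxv
              · exact Or.inr (mem_Fblock.2 ⟨by simp [zmod_add_one_ne hm b], by simp, by simp⟩)
            · rw [mem_AJ_inr] at hx
              simp only [Finset.mem_insert, Finset.mem_singleton, not_or] at hx
              exact Or.inr (mem_Fblock.2 ⟨by simp, by simp [hx.1], by simp [hx.2]⟩)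
          · intro _
            exact Or.inl (mem_Fblock.2 ⟨by simp, by simp [hab], by simp [hab1]⟩)
        · rw [add_sub_cancel_right]
          refine identifyBlock_subset_identifyBlock ?_ ?_
          · intro x hx hxv
            rcases x with j | j
            · rw [mem_AJ_inl] at hx
              simp only [Finset.mem_insert, Finset.mem_singleton] at hx
              rcases hx with rfl | rfl
              · exact Or.inr (mem_Xblock.2 ⟨by simp [hab], by simp, by simp [hab1]⟩)
              · exact absurd rfl hxv
            · rw [mem_AJ_inr] at hx
              simp only [Finset.mem_insert, Finset.mem_singleton, not_or] at hx
              exact Or.inr (mem_Xblock.2 ⟨by simp, by simp [hx.2], by simp⟩)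
          · intro _
            exact Or.inl (mem_Xblock.2 ⟨by simp, by simp [hab], by simp⟩)
      · -- k = a + 1
        refine skeleton _ _ (a+1) (tau_inr _ _ (Ne.symm (zmod_add_one_ne hm a)))
          (tau_inl _ _ hba) {a+1, b} (∅) ?_ ?_ ?_ ?_
        · rw [Finset.card_pair (fun h => hba h.symm)]; exact ⟨1, rfl⟩
        · simp
        · rw [add_sub_cancel_right]
          refine identifyBlock_subset_identifyBlock ?_ ?_
          · intro x hx hxv
            rcases x with j | j
            · rw [mem_AJ_inl] at hx
              simp only [Finset.mem_insert, Finset.mem_singleton] at hx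
              rcases hx with rfl | rfl
              · exact Or.inr (mem_Fblock.2 ⟨by simp [zmod_add_one_ne hm a], by simp, by simp⟩)
              · exact absurd rfl hxv
            · rw [mem_AJ_inr] at hx
              simp only [Finset.mem_insert, Finset.mem_singleton, not_or] at hx
              by_cases hja : j = a
              · exact Or.inl (by rw [hja])
              · exact Or.inr (mem_Fblock.2 ⟨by simp, by simp [hja], by simp [hx.1]⟩)
          · intro _
            exact Or.inr (mem_Fblock.2 ⟨by simp [Ne.symm hab], by simp, by simp⟩)
        · rw [add_sub_cancel_right]
          refine identifyBlock_subset_identifyBlock ?_ ?_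
          · intro x hx hxv
            rcases x with j | j
            · rw [mem_AJ_inl] at hx
              simp at hx
            · by_cases hja : j = a
              · exact Or.inl (by rw [hja])
              · exact Or.inr (mem_Xblock.2 ⟨by simp, by simp [hja], by simp⟩)
          · intro _
            exact Or.inr (mem_Xblock.2 ⟨by simp [Ne.symm hab], by simp, by simp [hba]⟩)
  · -- u = inr a, v = inr b
    have hab : a ≠ b := fun h => huv (by rw [h])
    by_cases hba : b = a + 1
    · -- k = b + 1
      have hab1 : a ≠ b + 1 := by
        intro h
        exact zmod_add_two_ne hm a
          (by rw [show (2:ZMod m) = 1 + 1 from by norm_num, ← add_assoc, ← hba, ← h])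
      refine skeleton _ _ (b+1) (tau_inr _ _ hab1)
        (tau_inr _ _ (Ne.symm (zmod_add_one_ne hm b))) {a, b+1} (∅) ?_ ?_ ?_ ?_
      · rw [Finset.card_pair hab1]; exact ⟨1, rfl⟩
      · simp
      · rw [add_sub_cancel_right]
        refine identifyBlock_subset_identifyBlock ?_ ?_
        · intro x hx hxv
          rcases x with j | j
          · rw [mem_AJ_inl] at hx
            simp only [Finset.mem_insert, Finset.mem_singleton] at hx
            rcases hx with rfl | rfl
            · exact Or.inr (mem_Fblock.2 ⟨by simp [hab], by simp, by simp⟩)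
            · exact Or.inr (mem_Fblock.2 ⟨by simp [zmod_add_one_ne hm b], by simp, by simp⟩)
          · rw [mem_AJ_inr] at hx
            simp only [Finset.mem_insert, Finset.mem_singleton, not_or] at hx
            have hjb : j ≠ b := fun h => hxv (by rw [h])
            exact Or.inr (mem_Fblock.2 ⟨by simp, by simp [hjb], by simp [hx.2]⟩)
        · intro _
          exact Or.inl (mem_Fblock.2 ⟨by simp, by simp [hab], by simp [hab1]⟩)
      · rw [add_sub_cancel_right]
        refine identifyBlock_subset_identifyBlock ?_ ?_
        · intro x hx hxv
          rcases x with j | j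
          · rw [mem_AJ_inl] at hx
            simp at hx
          · have hjb : j ≠ b := fun h => hxv (by rw [h])
            exact Or.inr (mem_Xblock.2 ⟨by simp, by simp [hjb], by simp⟩)
        · intro _
          exact Or.inl (mem_Xblock.2 ⟨by simp, by simp [hab], by simp⟩)
    · -- k = a + 1
      refine skeleton _ _ (a+1) (tau_inr _ _ (Ne.symm (zmod_add_one_ne hm a)))
        (tau_inr _ _ hba) {a+1, b} (∅) ?_ ?_ ?_ ?_
      · rw [Finset.card_pair (fun h => hba h.symm)]; exact ⟨1, rfl⟩
      · simp
      · rw [add_sub_cancel_right]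
        refine identifyBlock_subset_identifyBlock ?_ ?_
        · intro x hx hxv
          rcases x with j | j
          · rw [mem_AJ_inl] at hx
            simp only [Finset.mem_insert, Finset.mem_singleton] at hx
            rcases hx with rfl | rfl
            · exact Or.inr (mem_Fblock.2 ⟨by simp [zmod_add_one_ne hm a], by simp, by simp⟩)
            · exact Or.inr (mem_Fblock.2 ⟨by simp [Ne.symm hab], by simp, by simp⟩)
          · rw [mem_AJ_inr] at hx
            simp only [Finset.mem_insert, Finset.mem_singleton, not_or] at hx
            by_cases hja : j = a
            · exact Or.inl (by rw [hja])
            · exact Or.inr (mem_Fblock.2 ⟨by simp, by simp [hja], by simp [hx.1]⟩)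
        · intro _
          exact Or.inr (mem_Fblock.2 ⟨by simp, by simp [Ne.symm hab], by simp [hba]⟩)
      · rw [add_sub_cancel_right]
        refine identifyBlock_subset_identifyBlock ?_ ?_
        · intro x hx hxv
          rcases x with j | j
          · rw [mem_AJ_inl] at hx
            simp at hx
          · by_cases hja : j = a
            · exact Or.inl (by rw [hja])
            · exact Or.inr (mem_Xblock.2 ⟨by simp, by simp [hja], by simp⟩)
        · intro _
          exact Or.inr (mem_Xblock.2 ⟨by simp, by simp [Ne.symm hab], by simp⟩)
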